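/- arXiv:2103.15261 — 2 statements merged into one kernel-verified Lean document; each statement's English description precedes it below -/
import Mathlib

section
/- Let x₁, …, xₙ be distinct real numbers and let K(x, x') = ∑_{k=0}^∞ b_k (x x')^k be a kernel with b_k > 0 for all k and convergent for all relevant arguments. Then the n×n Gram matrix H with H_{ij} = K(x_i, x_j) is positive definite (in particular nonsingular). -/
/-- For distinct reals `x₁,…,xₙ` and a kernel `K(x,x') = ∑ₖ bₖ (x x')^k` with all `bₖ > 0`
(and the relevant series summable), the Gram matrix `H` is positive definite. -/
theorem stmt_1 {n : ℕ} (x : Fin n → ℝ) (hx : Function.Injective x)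
    (b : ℕ → ℝ) (hb : ∀ k, 0 < b k)
    (hsum : ∀ i j, Summable fun k => b k * (x i * x j) ^ k) :
    (Matrix.of fun i j : Fin n => ∑' k : ℕ, b k * (x i * x j) ^ k).PosDef := by
  have hS : ∀ i j : Fin n, ∀ v : Fin n → ℝ,
      Summable fun k => b k * (v i * x i ^ k) * (v j * x j ^ k) := by
    intro i j v
    apply ((hsum i j).mul_left (v i * v j)).congr
    intro k; rw [mul_pow]; ring
  rw [Matrix.posDef_iff_dotProduct_mulVec]
  constructor
  · ext i j
    simp [Matrix.conjTranspose, mul_comm (x i) (x j)]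
  · intro v hv
    have hident : ∀ k : ℕ, (∑ i, ∑ j, b k * (v i * x i ^ k) * (v j * x j ^ k))
        = b k * (∑ i, v i * x i ^ k) ^ 2 := by
      intro k
      rw [sq, Finset.sum_mul_sum, Finset.mul_sum]
      exact Finset.sum_congr rfl fun i _ => by
        rw [Finset.mul_sum]; exact Finset.sum_congr rfl fun j _ => by ring
    have hG : Summable fun k => b k * (∑ i, v i * x i ^ k) ^ 2 := by
      apply (summable_sum (s := Finset.univ)
        (f := fun (i : Fin n) k => ∑ j, b k * (v i * x i ^ k) * (v j * x j ^ k))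
        (fun i _ => summable_sum fun j _ => hS i j v)).congr
      intro k
      exact hident k
    have key : dotProduct (star v) ((Matrix.of fun i j : Fin n =>
        ∑' k : ℕ, b k * (x i * x j) ^ k).mulVec v)
        = ∑' k : ℕ, b k * (∑ i, v i * x i ^ k) ^ 2 := by
      simp only [dotProduct, Matrix.mulVec, Matrix.of_apply,
        Pi.star_apply, star_trivial]
      have hterm : ∀ i j : Fin n, v i * ((∑' k : ℕ, b k * (x i * x j) ^ k) * v j)
          = ∑' k : ℕ, b k * (v i * x i ^ k) * (v j * x j ^ k) := by
        intro i j
        rw [← tsum_mul_right, ← tsum_mul_left]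
        congr 1; ext k; rw [mul_pow]; ring
      calc (∑ i, v i * ∑ j, (∑' k : ℕ, b k * (x i * x j) ^ k) * v j)
          = ∑ i, ∑ j, ∑' k : ℕ, b k * (v i * x i ^ k) * (v j * x j ^ k) := by
            simp_rw [Finset.mul_sum]; exact Finset.sum_congr rfl fun i _ =>
              Finset.sum_congr rfl fun j _ => hterm i j
        _ = ∑' k : ℕ, ∑ i, ∑ j, b k * (v i * x i ^ k) * (v j * x j ^ k) := by
            rw [eq_comm, Summable.tsum_finsetSum (fun i _ => summable_sum fun j _ => hS i j v)]
            exact Finset.sum_congr rfl fun i _ =>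
              Summable.tsum_finsetSum fun j _ => hS i j v
        _ = ∑' k : ℕ, b k * (∑ i, v i * x i ^ k) ^ 2 := by
            exact tsum_congr hident
    rw [key]
    obtain ⟨k₀, hk₀⟩ : ∃ k : ℕ, (∑ i, v i * x i ^ k) ≠ 0 := by
      by_contra h
      push_neg at h
      exact hv (Matrix.eq_zero_of_forall_pow_sum_mul_pow_eq_zero hx
        (fun i : Fin n => h (i : ℕ)))
    exact Summable.tsum_pos hG (fun k => mul_nonneg (hb k).le (sq_nonneg _)) k₀
      (mul_pos (hb k₀) (by positivity))
end

section
/- If A and B are positive semidefinite real matrices with A ⪰ B, and P_B denotes the orthogonal projection onto the column space of B, then P_B A⁻¹ P_B ⪯ B⁺ whenever A is invertible, where B⁺ is the Moore–Penrose pseudoinverse. -/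
open Matrix

/-- The four Penrose conditions characterizing the Moore–Penrose pseudoinverse. -/
def IsMoorePenrose {n : Type*} [Fintype n] (A P : Matrix n n ℝ) : Prop :=
  A * P * A = A ∧ P * A * P = P ∧ (A * P)ᵀ = A * P ∧ (P * A)ᵀ = P * A

lemma mp_unique {n : Type*} [Fintype n] (A P Q : Matrix n n ℝ)
    (hP : IsMoorePenrose A P) (hQ : IsMoorePenrose A Q) : P = Q := by
  obtain ⟨hP1, hP2, hP3, hP4⟩ := hP
  obtain ⟨hQ1, hQ2, hQ3, hQ4⟩ := hQ
  have hAP : A * P = A * Q := by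
    calc A * P = (A * Q * A) * P := by rw [hQ1]
      _ = (A * Q) * (A * P) := by rw [mul_assoc]
      _ = (A * Q)ᵀ * (A * P)ᵀ := by rw [hQ3, hP3]
      _ = ((A * P) * (A * Q))ᵀ := by rw [← transpose_mul]
      _ = ((A * P * A) * Q)ᵀ := by noncomm_ring
      _ = (A * Q)ᵀ := by rw [hP1]
      _ = A * Q := hQ3
  have hPA : P * A = Q * A := by
    calc P * A = P * (A * Q * A) := by rw [hQ1]
      _ = (P * A) * (Q * A) := by noncomm_ring
      _ = (P * A)ᵀ * (Q * A)ᵀ := by rw [hP4, hQ4]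
      _ = ((Q * A) * (P * A))ᵀ := by rw [← transpose_mul]
      _ = (Q * (A * P * A))ᵀ := by noncomm_ring
      _ = (Q * A)ᵀ := by rw [hP1]
      _ = Q * A := hQ4
  calc P = P * A * P := hP2.symm
    _ = P * (A * Q) := by rw [mul_assoc, hAP]
    _ = (P * A) * Q := by rw [mul_assoc]
    _ = Q * A * Q := by rw [hPA]
    _ = Q := hQ2

/-- If `A ⪰ B ⪰ 0` with `A` invertible, and `P_B = B B⁺` is the orthogonal projection onto the
column space of `B`, then `P_B A⁻¹ P_B ⪯ B⁺`. -/
theorem stmt_17 {n : ℕ} (A B Bp : Matrix (Fin n) (Fin n) ℝ)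
    (hA : A.PosSemidef) (hB : B.PosSemidef) (hAB : (A - B).PosSemidef)
    [Invertible A] (hBp : IsMoorePenrose B Bp) :
    (Bp - (B * Bp) * A⁻¹ * (B * Bp)).PosSemidef := by
  have hBsym : Bᵀ = B := by simpa [Matrix.IsSymm] using hB.1
  have hAsym : Aᵀ = A := by simpa [Matrix.IsSymm] using hA.1
  obtain ⟨h1, h2, h3, h4⟩ := hBp
  -- Bpᵀ is also a Moore-Penrose inverse of B, hence Bp is symmetric
  have hmpT : IsMoorePenrose B Bpᵀ := by
    refine ⟨?_, ?_, ?_, ?_⟩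
    · calc B * Bpᵀ * B = (Bᵀ * Bp * Bᵀ)ᵀ := by simp [transpose_mul, mul_assoc]
      _ = (B * Bp * B)ᵀ := by rw [hBsym]
      _ = B := by rw [h1, hBsym]
    · calc Bpᵀ * B * Bpᵀ = (Bp * Bᵀ * Bp)ᵀ := by simp [transpose_mul, mul_assoc]
      _ = (Bp * B * Bp)ᵀ := by rw [hBsym]
      _ = Bpᵀ := by rw [h2]
    · calc (B * Bpᵀ)ᵀ = Bp * Bᵀ := by simp
      _ = Bp * B := by rw [hBsym]
      _ = (Bp * B)ᵀ := h4.symm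
      _ = Bᵀ * Bpᵀ := by rw [transpose_mul]
      _ = B * Bpᵀ := by rw [hBsym]
    · calc (Bpᵀ * B)ᵀ = Bᵀ * Bp := by simp
      _ = B * Bp := by rw [hBsym]
      _ = (B * Bp)ᵀ := h3.symm
      _ = Bpᵀ * Bᵀ := by rw [transpose_mul]
      _ = Bpᵀ * B := by rw [hBsym]
  have hs : Bpᵀ = Bp := mp_unique B Bpᵀ Bp hmpT ⟨h1, h2, h3, h4⟩
  have hcomm : Bp * B = B * Bp := by
    calc Bp * B = (Bp * B)ᵀ := h4.symm
      _ = Bᵀ * Bpᵀ := by rw [transpose_mul]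
      _ = B * Bp := by rw [hBsym, hs]
  -- inverse facts
  set C := A⁻¹ with hC
  have hAC : A * C = 1 := mul_inv_of_invertible A
  have hCA : C * A = 1 := inv_mul_of_invertible A
  have hCsym : Cᵀ = C := by rw [hC, transpose_nonsing_inv, hAsym]
  -- key identity: B - B C B = (1 - C B)ᵀ B (1 - C B) + (C B)ᵀ (A - B) (C B)
  have key : (1 - C * B)ᵀ * B * (1 - C * B) + (C * B)ᵀ * (A - B) * (C * B)
      = B - B * C * B := by
    have hmid : ∀ X : Matrix (Fin n) (Fin n) ℝ, C * (A * X) = X := fun X => by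
      rw [← mul_assoc, hCA, one_mul]
    simp only [transpose_sub, transpose_mul, transpose_one, hBsym, hCsym]
    simp only [Matrix.mul_sub, Matrix.sub_mul, Matrix.one_mul, Matrix.mul_one,
      mul_assoc, hmid]
    abel
  have keyPSD : (B - B * C * B).PosSemidef := by
    rw [← key]
    have p1 : ((1 - C * B)ᵀ * B * (1 - C * B)).PosSemidef := by
      have := hB.conjTranspose_mul_mul_same (1 - C * B)
      simpa using this
    have p2 : ((C * B)ᵀ * (A - B) * (C * B)).PosSemidef := by
      have := hAB.conjTranspose_mul_mul_same (C * B)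
      simpa using this
    exact p1.add p2
  -- conjugate by Bp
  have final : Bpᵀ * (B - B * C * B) * Bp = Bp - (B * Bp) * C * (B * Bp) := by
    rw [hs]
    have e1 : Bp * (B - B * C * B) * Bp = Bp * B * Bp - (Bp * B) * C * (B * Bp) := by
      noncomm_ring
    rw [e1, h2, hcomm]
  have := keyPSD.conjTranspose_mul_mul_same Bp
  rw [show Bpᴴ = Bpᵀ from rfl] at this
  rw [final] at this
  exact this
end
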